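/- Let g ≥ 2 and consider qubit effects E_j = (1/2)(I_2 + t_j X_j) for t_j ∈ [0,1], where X_j = cos(jπ/g)σ_X + sin(jπ/g)σ_Y. If E_1, …, E_g are jointly measurable (as binary POVMs (E_j, I - E_j)), then Σ_{j=1}^g t_j ≤ 1/sin(π/(2g)). -/

import Mathlib

open Matrix
open scoped ComplexOrder

noncomputable def sigmaX : Matrix (Fin 2) (Fin 2) ℂ := !![0, 1; 1, 0]

noncomputable def sigmaY : Matrix (Fin 2) (Fin 2) ℂ := !![0, -Complex.I; Complex.I, 0]

/-- The planar qubit observable `X_j = cos(jπ/g)σ_X + sin(jπ/g)σ_Y`, for `j ∈ [g]`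
(here `j : Fin g` represents the integer `j+1 ∈ {1,…,g}`). -/
noncomputable def planarX (g : ℕ) (j : Fin g) : Matrix (Fin 2) (Fin 2) ℂ :=
  (Real.cos (((j : ℕ) + 1) * Real.pi / g) : ℂ) • sigmaX
    + (Real.sin (((j : ℕ) + 1) * Real.pi / g) : ℂ) • sigmaY

/-- A family `E` of POVMs on `ℂ^d` (the `i`-th having `k i` outcomes) is jointly
measurable if there is a joint POVM `G` indexed by outcome tuples whose marginals
are the `E i`. -/
def JointlyMeasurable {d g : ℕ} (k : Fin g → ℕ)
    (E : ∀ i : Fin g, Fin (k i) → Matrix (Fin d) (Fin d) ℂ) : Prop :=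
  ∃ G : (∀ i : Fin g, Fin (k i)) → Matrix (Fin d) (Fin d) ℂ,
    (∀ η, (G η).PosSemidef) ∧ (∑ η, G η = 1) ∧
      ∀ (u : Fin g) (v : Fin (k u)),
        E u v = ∑ η ∈ Finset.univ.filter (fun η : ∀ i : Fin g, Fin (k i) => η u = v), G η

/-!
Summing the positivity of `(1 - ∑ⱼ εⱼ(η) Yⱼ) G_η` over the outcomes `η` of a joint POVM `G`,
and using `∑_η εⱼ(η) G_η = 2Eⱼ - 1`, shows that every incompatibility witness `Y` satisfies
`∑ⱼ tr(Yⱼ (2Eⱼ - 1)) ≤ d`.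

For the planar observables, `∑ⱼ εⱼ Xⱼ` is the off-diagonal Hermitian matrix with entry
`z = ∑ⱼ εⱼ e^{i(j+1)π/g}`. Rotating by `arg z` gives `|z| ≤ ∑ₖ |cos(ψ + kπ/g)|` for some `ψ`, and
with `δ = π/(2g)` the identity `2 sin δ cos x = sin(x + δ) - sin(x - δ)` telescopes this sum to at
most `1 / sin δ`. Hence `sin δ • X` is a witness; as `2Eⱼ - 1 = tⱼ Xⱼ` and `Xⱼ² = 1`, the bound
reads `2 sin δ ∑ⱼ tⱼ ≤ 2`.
-/

section Trigonometry

open Real Finset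

lemma two_mul_sin_mul_sum_range_cos (ψ δ : ℝ) (n : ℕ) :
    2 * sin δ * ∑ k ∈ range n, cos (ψ + k * (2 * δ)) =
      sin (ψ + n * (2 * δ) - δ) - sin (ψ - δ) := by
  induction n with
  | zero => simp
  | succ n ih =>
    rw [sum_range_succ, mul_add, ih, Nat.cast_succ,
      show ψ + (n + 1) * (2 * δ) - δ = ψ + n * (2 * δ) + δ by ring, sin_add, sin_sub]
    ring

lemma sum_range_abs_eq_of_sign_change {f : ℕ → ℝ} {m n : ℕ} (hmn : m ≤ n)
    (hpos : ∀ k < m, 0 ≤ f k) (hneg : ∀ k, m ≤ k → k < n → f k ≤ 0) :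
    ∑ k ∈ range n, |f k| = 2 * ∑ k ∈ range m, f k - ∑ k ∈ range n, f k := by
  rw [← sum_range_add_sum_Ico _ hmn, ← sum_range_add_sum_Ico _ hmn,
    sum_congr rfl fun k hk => abs_of_nonneg (hpos k (mem_range.mp hk)),
    sum_congr rfl fun k hk => abs_of_nonpos (hneg k (mem_Ico.mp hk).1 (mem_Ico.mp hk).2),
    sum_neg_distrib]
  ring

lemma sin_pi_div_two_mul_pos {g : ℕ} (hg : 1 ≤ g) : 0 < sin (π / (2 * g)) := by
  have hg' : (1 : ℝ) ≤ g := by exact_mod_cast hg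
  apply sin_pos_of_pos_of_lt_pi (by positivity)
  rw [div_lt_iff₀ (by positivity)]
  nlinarith [pi_pos]

lemma sum_range_abs_cos_le_of_mem_Ico {g : ℕ} (hg : 1 ≤ g) {ψ : ℝ}
    (hψ : ψ ∈ Set.Ico (-(π / 2)) (π / 2)) :
    ∑ k ∈ range g, |cos (ψ + k * (π / g))| ≤ 1 / sin (π / (2 * g)) := by
  set δ := π / (2 * g)
  have hstep : π / g = 2 * δ := by simp only [δ]; field_simp
  have hgδ : g * (2 * δ) = π := by rw [← hstep]; field_simp
  have hδ : 0 ≤ 2 * δ := by positivity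
  rw [hstep]
  -- the indices `k < m` are those with `ψ + k * (2 * δ) < π / 2`
  set m := min g ⌈(π / 2 - ψ) / (2 * δ)⌉₊
  have hpos : ∀ k < m, 0 ≤ cos (ψ + k * (2 * δ)) := by
    intro k hk
    have hk' : (k : ℝ) < (π / 2 - ψ) / (2 * δ) := Nat.lt_ceil.mp (lt_min_iff.mp hk).2
    rw [lt_div_iff₀ (by positivity)] at hk'
    exact cos_nonneg_of_mem_Icc ⟨by nlinarith [hψ.1], by linarith⟩
  have hneg : ∀ k, m ≤ k → k < g → cos (ψ + k * (2 * δ)) ≤ 0 := by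
    intro k hmk hkg
    have hk' : (π / 2 - ψ) / (2 * δ) ≤ k :=
      Nat.ceil_le.mp ((min_le_iff.mp hmk).resolve_left (by omega))
    rw [div_le_iff₀ (by positivity)] at hk'
    have : (k : ℝ) * (2 * δ) ≤ g * (2 * δ) := by gcongr
    exact cos_nonpos_of_pi_div_two_le_of_le (by linarith) (by linarith [hψ.2])
  have hsum := two_mul_sin_mul_sum_range_cos ψ δ m
  have htotal := two_mul_sin_mul_sum_range_cos ψ δ g
  rw [hgδ, show ψ + π - δ = ψ - δ + π by ring, sin_add_pi] at htotal
  rw [sum_range_abs_eq_of_sign_change (min_le_left _ _) hpos hneg,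
    le_div_iff₀ (sin_pi_div_two_mul_pos hg)]
  -- the left side is now `2 * sin (ψ + m * (2 * δ) - δ)`
  nlinarith [sin_le_one (ψ + m * (2 * δ) - δ)]

lemma abs_cos_add_int_mul_pi (x : ℝ) (n : ℤ) : |cos (x + n * π)| = |cos x| := by
  rw [cos_add_int_mul_pi, abs_mul, abs_neg_one_zpow, one_mul]

lemma sum_range_abs_cos_le {g : ℕ} (hg : 1 ≤ g) (ψ : ℝ) :
    ∑ k ∈ range g, |cos (ψ + k * (π / g))| ≤ 1 / sin (π / (2 * g)) := by
  set ψ₀ := toIcoMod pi_pos (-(π / 2)) ψ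
  have hψ₀ : ψ₀ ∈ Set.Ico (-(π / 2)) (-(π / 2) + π) := toIcoMod_mem_Ico pi_pos _ ψ
  have hψ : ψ - ψ₀ = toIcoDiv pi_pos (-(π / 2)) ψ * π :=
    self_sub_toIcoMod_eq_mul pi_pos _ ψ
  calc ∑ k ∈ range g, |cos (ψ + k * (π / g))|
      = ∑ k ∈ range g, |cos (ψ₀ + k * (π / g))| :=
        sum_congr rfl fun k _ => by
          rw [← abs_cos_add_int_mul_pi (ψ₀ + k * (π / g)), ← hψ]
          ring_nf
    _ ≤ 1 / sin (π / (2 * g)) :=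
        sum_range_abs_cos_le_of_mem_Ico hg ⟨hψ₀.1, by linarith [hψ₀.2]⟩

end Trigonometry

open Complex

lemma exists_norm_sum_smul_exp_le {ι : Type*} [Fintype ι] (ε θ : ι → ℝ)
    (hε : ∀ j, |ε j| ≤ 1) :
    ∃ φ : ℝ, ‖∑ j, ε j • exp (θ j * I)‖ ≤ ∑ j, |Real.cos (θ j - φ)| := by
  set z := ∑ j, ε j • exp (θ j * I)
  refine ⟨arg z, ?_⟩
  have hrot : z * exp (-(arg z * I)) = ‖z‖ := by
    nth_rewrite 1 [← norm_mul_exp_arg_mul_I z]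
    rw [mul_assoc, ← exp_add, add_neg_cancel, exp_zero, mul_one]
  calc ‖z‖ = (z * exp (-(arg z * I))).re := by rw [hrot, ofReal_re]
    _ = ∑ j, ε j * Real.cos (θ j - arg z) := by
        simp only [z, Finset.sum_mul, re_sum, smul_mul_assoc, ← exp_add, smul_re]
        refine Finset.sum_congr rfl fun j _ => ?_
        rw [← exp_ofReal_mul_I_re, smul_eq_mul]
        push_cast
        ring_nf
    _ ≤ ∑ j, |Real.cos (θ j - arg z)| := Finset.sum_le_sum fun j _ => by
        calc ε j * Real.cos (θ j - arg z) ≤ |ε j| * |Real.cos (θ j - arg z)| := by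
              rw [← abs_mul]; exact le_abs_self _
          _ ≤ |Real.cos (θ j - arg z)| := mul_le_of_le_one_left (abs_nonneg _) (hε j)

def hermOffDiag : ℂ →ₗ[ℝ] Matrix (Fin 2) (Fin 2) ℂ where
  toFun c := !![0, star c; c, 0]
  map_add' a b := by ext i j; fin_cases i <;> fin_cases j <;> simp
  map_smul' r c := by ext i j; fin_cases i <;> fin_cases j <;> simp

lemma hermOffDiag_mul_self (c : ℂ) :
    hermOffDiag c * hermOffDiag c = ((‖c‖ ^ 2 : ℝ) : ℂ) • 1 := by
  ext i j; fin_cases i <;> fin_cases j <;> simp [hermOffDiag, Complex.mul_conj', Complex.conj_mul']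

lemma posSemidef_one_sub_hermOffDiag {c : ℂ} (hc : ‖c‖ ≤ 1) :
    (1 - hermOffDiag c).PosSemidef := by
  set r : ℂ := ((√(1 - ‖c‖ ^ 2) : ℝ) : ℂ)
  have hr : starRingEnd ℂ r * r = 1 - c * starRingEnd ℂ c := by
    have h : 0 ≤ 1 - ‖c‖ ^ 2 := by nlinarith [norm_nonneg c]
    rw [Complex.conj_ofReal, ← ofReal_mul, Real.mul_self_sqrt h, Complex.mul_conj']
    push_cast; ring
  have : 1 - hermOffDiag c = (!![1, -star c; 0, r])ᴴ * !![1, -star c; 0, r] := by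
    ext i j; fin_cases i <;> fin_cases j <;> simp [hermOffDiag, mul_apply, Fin.sum_univ_two, hr]
  rw [this]
  exact posSemidef_conjTranspose_mul_self _

lemma planarX_eq_hermOffDiag (g : ℕ) (j : Fin g) :
    planarX g j = hermOffDiag (exp ((((j : ℕ) + 1) * Real.pi / g : ℝ) * I)) := by
  rw [exp_mul_I, ← ofReal_cos, ← ofReal_sin]
  ext a b
  fin_cases a <;> fin_cases b <;>
    simp [planarX, sigmaX, sigmaY, hermOffDiag, -ofReal_cos, -ofReal_sin]

lemma planarX_mul_self (g : ℕ) (j : Fin g) : planarX g j * planarX g j = 1 := by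
  rw [planarX_eq_hermOffDiag, hermOffDiag_mul_self, norm_exp_ofReal_mul_I]
  simp

open scoped MatrixOrder in
lemma Matrix.PosSemidef.trace_mul_nonneg {𝕜 n : Type*} [RCLike 𝕜] [Fintype n]
    {A B : Matrix n n 𝕜} (hA : A.PosSemidef) (hB : B.PosSemidef) : 0 ≤ (A * B).trace := by
  classical
  obtain ⟨C, rfl⟩ := CStarAlgebra.nonneg_iff_eq_star_mul_self.mp hB.nonneg
  rw [star_eq_conjTranspose, ← mul_assoc, trace_mul_cycle]
  exact (hA.mul_mul_conjTranspose_same C).trace_nonneg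

def outcomeSign (v : Fin 2) : ℝ := if v = 0 then 1 else -1

lemma abs_outcomeSign (v : Fin 2) : |outcomeSign v| = 1 := by
  unfold outcomeSign; split_ifs <;> simp

lemma sum_outcomeSign_smul {ι M : Type*} [Fintype ι] [DecidableEq ι] [AddCommGroup M]
    [Module ℝ M] (G : (ι → Fin 2) → M) (j : ι) :
    ∑ η, outcomeSign (η j) • G η =
      2 • ∑ η ∈ Finset.univ.filter (fun η => η j = 0), G η - ∑ η, G η := by
  rw [← Finset.sum_filter_add_sum_filter_not Finset.univ (fun η => η j = 0) G]
  simp only [outcomeSign, ite_smul, one_smul, neg_smul, Finset.sum_ite, Finset.sum_neg_distrib]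
  abel

/-- Sign vectors `ε ∈ {±1}^g` are encoded by outcome tuples `η`,
as `εⱼ = outcomeSign (η j)`. -/
def IsIncompatibilityWitness {d g : ℕ} (Y : Fin g → Matrix (Fin d) (Fin d) ℂ) : Prop :=
  ∀ η : Fin g → Fin 2, (1 - ∑ j, outcomeSign (η j) • Y j).PosSemidef

theorem JointlyMeasurable.sum_trace_le {d g : ℕ}
    {E : Fin g → Fin 2 → Matrix (Fin d) (Fin d) ℂ} (hE : JointlyMeasurable (fun _ => 2) E)
    {Y : Fin g → Matrix (Fin d) (Fin d) ℂ} (hY : IsIncompatibilityWitness Y) :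
    ∑ j, (Y j * (2 • E j 0 - 1)).trace ≤ (d : ℂ) := by
  obtain ⟨G, hG, hsum, hmarg⟩ := hE
  have hsigned : ∀ j, 2 • E j 0 - 1 = ∑ η, outcomeSign (η j) • G η := fun j => by
    rw [sum_outcomeSign_smul, hsum, hmarg]
  have hpair : 0 ≤ ∑ η, ((1 - ∑ j, outcomeSign (η j) • Y j) * G η).trace :=
    Finset.sum_nonneg fun η _ => (hY η).trace_mul_nonneg (hG η)
  calc ∑ j, (Y j * (2 • E j 0 - 1)).trace
      = ∑ η, (G η).trace - ∑ η, ((1 - ∑ j, outcomeSign (η j) • Y j) * G η).trace := by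
        simp only [hsigned, sub_mul, one_mul, trace_sub, Finset.sum_sub_distrib, Finset.sum_mul,
          Finset.mul_sum, trace_sum, Matrix.mul_smul, Matrix.smul_mul, trace_smul]
        rw [sub_sub_cancel, Finset.sum_comm]
    _ ≤ ∑ η, (G η).trace := sub_le_self _ hpair
    _ = d := by rw [← trace_sum, hsum, trace_one]; simp

lemma norm_sum_smul_exp_planar_le {g : ℕ} (hg : 1 ≤ g) (ε : Fin g → ℝ)
    (hε : ∀ j, |ε j| ≤ 1) :
    ‖∑ j : Fin g, ε j • exp ((((j : ℕ) + 1) * Real.pi / g : ℝ) * I)‖ ≤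
      1 / Real.sin (Real.pi / (2 * g)) := by
  obtain ⟨φ, hφ⟩ := exists_norm_sum_smul_exp_le ε _ hε
  refine hφ.trans (le_of_eq_of_le ?_ (sum_range_abs_cos_le hg (Real.pi / g - φ)))
  rw [Fin.sum_univ_eq_sum_range (fun k => |Real.cos ((k + 1) * Real.pi / g - φ)|)]
  refine Finset.sum_congr rfl fun k _ => ?_
  ring_nf

lemma isIncompatibilityWitness_planarX {g : ℕ} (hg : 1 ≤ g) :
    IsIncompatibilityWitness (fun j => Real.sin (Real.pi / (2 * g : ℝ)) • planarX g j) := by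
  intro η
  have hs := sin_pi_div_two_mul_pos hg
  simp only [planarX_eq_hermOffDiag, ← map_smul, ← map_sum, smul_comm _ (Real.sin _),
    ← Finset.smul_sum]
  refine posSemidef_one_sub_hermOffDiag ?_
  rw [norm_smul, Real.norm_of_nonneg hs.le]
  calc Real.sin (Real.pi / (2 * g)) * ‖_‖
      ≤ Real.sin (Real.pi / (2 * g)) * (1 / Real.sin (Real.pi / (2 * g))) :=
        mul_le_mul_of_nonneg_left
          (norm_sum_smul_exp_planar_le hg _ fun j => (abs_outcomeSign _).le) hs.le
    _ = 1 := mul_one_div_cancel hs.ne'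

theorem stmt_15_general (g : ℕ) (hg : 2 ≤ g) (t : Fin g → ℝ)
    (hJM : JointlyMeasurable (fun _ : Fin g => 2)
      (fun j v => if v = (0 : Fin 2)
        then ((1 / 2 : ℝ) : ℂ) • (1 + (t j : ℂ) • planarX g j)
        else 1 - ((1 / 2 : ℝ) : ℂ) • (1 + (t j : ℂ) • planarX g j))) :
    ∑ j, t j ≤ 1 / Real.sin (Real.pi / (2 * g)) := by
  have hg1 : 1 ≤ g := by omega
  have hbound := hJM.sum_trace_le (isIncompatibilityWitness_planarX hg1)
  set s := Real.sin (Real.pi / (2 * g))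
  have hterm : ∀ j, (s • planarX g j *
      (2 • ((1 / 2 : ℝ) : ℂ) • (1 + (t j : ℂ) • planarX g j) - 1)).trace =
        ((2 * s * t j : ℝ) : ℂ) := by
    intro j
    have hsigned : 2 • ((1 / 2 : ℝ) : ℂ) • (1 + (t j : ℂ) • planarX g j) - 1 =
        (t j : ℂ) • planarX g j := by
      push_cast
      module
    simp only [hsigned, Matrix.smul_mul, Matrix.mul_smul, planarX_mul_self, trace_smul, trace_one,
      Fintype.card_fin, real_smul, smul_eq_mul, ofReal_mul]
    push_cast
    ring
  simp only [if_pos, hterm] at hbound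
  have hsum : 2 * s * ∑ j, t j ≤ 2 := by
    rw [Finset.mul_sum]
    exact_mod_cast hbound
  rw [le_div_iff₀ (sin_pi_div_two_mul_pos hg1)]
  linarith

/-- If the planar qubit effects `E_j = (1/2)(I₂ + t_j X_j)` are jointly measurable as
binary POVMs `(E_j, I - E_j)`, then `∑ⱼ tⱼ ≤ 1/sin(π/(2g))`. -/
theorem stmt_15 (g : ℕ) (hg : 2 ≤ g) (t : Fin g → ℝ) (ht : ∀ j, t j ∈ Set.Icc (0 : ℝ) 1)
    (hJM : JointlyMeasurable (fun _ : Fin g => 2)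
      (fun j v => if v = (0 : Fin 2)
        then ((1 / 2 : ℝ) : ℂ) • (1 + (t j : ℂ) • planarX g j)
        else 1 - ((1 / 2 : ℝ) : ℂ) • (1 + (t j : ℂ) • planarX g j))) :
    ∑ j, t j ≤ 1 / Real.sin (Real.pi / (2 * g)) :=
  stmt_15_general g hg t hJM
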